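/- Let 𝒜 be a family of subsets of {1,…,n} and for A ∈ 𝒜 let c(A) be the largest k such that A lies in a chain of k sets from 𝒜. Then the sum over all A ∈ 𝒜 of 1/(C(n, |A|) · c(A)) equals 1 if and only if 𝒜 is a union of complete levels, i.e., there is a set S of sizes such that 𝒜 consists exactly of all subsets of [n] whose cardinality lies in S. -/

import Mathlib

/-!
A permutation `σ` of `[n]` determines the maximal chain `∅ = C₀ ⊂ C₁ ⊂ ⋯ ⊂ Cₙ = [n]` of the sets
of its first `k` entries, and a set `A` lies on `n! / C(n, |A|)` of these `n!` chains. The members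
of `𝒜` on one maximal chain form a chain in `𝒜`, so if there are `t` of them each has `c ≥ t`, and
their values of `1 / c` add up to at most `1`, with equality iff `t ≥ 1` and all of them have
`c = t`. Double counting makes the sum in the theorem the average of these chain sums, so it equals
`1` iff every chain sum does. In that case `𝒜` is closed under exchanging an element `a ∈ A` for
`b ∉ A`: on a chain through `A - a ⊂ A ⊂ A + b`, swapping the positions of `a` and `b` replaces `A`
by `A - a + b` and fixes all other sets, so if `A - a + b ∉ 𝒜` the new chain meets `𝒜` in one set
fewer while its members keep their value of `c`. Closure under exchange makes `𝒜` a union of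
levels. Conversely, for a union of levels every maximal chain meets `𝒜` once in each level present,
and `c` is the number of these levels.
-/

open Finset Equiv
open scoped Pointwise Nat

section Chains

variable {α : Type*} [Preorder α]

def chainLengths (𝒜 : Finset α) (a : α) : Set ℕ :=
  {k | ∃ f : Fin k → α, StrictMono f ∧ (∀ i, f i ∈ 𝒜) ∧ ∃ i, f i = a}

lemma card_mem_chainLengths {𝒜 : Finset α} {T : Finset ℕ} {g : ℕ → α}
    (hg : StrictMonoOn g T) (hmem : ∀ t ∈ T, g t ∈ 𝒜) {t : ℕ} (ht : t ∈ T) :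
    #T ∈ chainLengths 𝒜 (g t) := by
  let e := T.orderIsoOfFin rfl
  refine ⟨fun i => g (e i), fun i j hij => hg (e i).2 (e j).2 (e.strictMono hij),
    fun i => hmem _ (e i).2, e.symm ⟨t, ht⟩, by simp⟩

end Chains

lemma le_card_image_card_of_mem_chainLengths {α : Type*} {𝒜 : Finset (Finset α)}
    {A : Finset α} {k : ℕ} (hk : k ∈ chainLengths 𝒜 A) : k ≤ #(𝒜.image card) := by
  obtain ⟨f, hf, hmem, -⟩ := hk
  have hcard : StrictMono fun i => #(f i) := fun i j hij => card_lt_card (hf hij)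
  simpa using card_le_card_of_injOn (fun i => #(f i)) (s := univ)
    (fun i _ => mem_image_of_mem _ (hmem i)) hcard.injective.injOn

section Reciprocals

variable {ι : Type*} {T : Finset ι} {x : ι → ℕ}

lemma sum_inv_le_one_of_card_le (hx : ∀ i ∈ T, #T ≤ x i) : ∑ i ∈ T, (x i : ℝ)⁻¹ ≤ 1 := by
  rcases T.eq_empty_or_nonempty with rfl | hT
  · simp
  have hpos : (0 : ℝ) < #T := by exact_mod_cast hT.card_pos
  calc ∑ i ∈ T, (x i : ℝ)⁻¹ ≤ ∑ _i ∈ T, (#T : ℝ)⁻¹ :=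
        sum_le_sum fun i hi => inv_anti₀ hpos (by exact_mod_cast hx i hi)
    _ = 1 := by rw [sum_const, nsmul_eq_mul, mul_inv_cancel₀ hpos.ne']

lemma eq_card_of_sum_inv_eq_one (hx : ∀ i ∈ T, #T ≤ x i) (h : ∑ i ∈ T, (x i : ℝ)⁻¹ = 1) :
    ∀ i ∈ T, x i = #T := by
  have hT : T.Nonempty := nonempty_of_sum_ne_zero (h ▸ one_ne_zero)
  have hpos : (0 : ℝ) < #T := by exact_mod_cast hT.card_pos
  have hle : ∀ i ∈ T, (x i : ℝ)⁻¹ ≤ (#T : ℝ)⁻¹ := fun i hi =>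
    inv_anti₀ hpos (by exact_mod_cast hx i hi)
  have heq := (sum_eq_sum_iff_of_le hle).1 <| by
    rw [h, sum_const, nsmul_eq_mul, mul_inv_cancel₀ hpos.ne']
  intro i hi
  exact_mod_cast inv_injective (heq i hi)

end Reciprocals

lemma mem_of_card_eq_of_insert_erase_mem {α : Type*} [DecidableEq α] {𝒜 : Finset (Finset α)}
    (hex : ∀ A ∈ 𝒜, ∀ a ∈ A, ∀ b ∉ A, insert b (A.erase a) ∈ 𝒜) {A B : Finset α}
    (hA : A ∈ 𝒜) (hAB : #A = #B) : B ∈ 𝒜 := by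
  induction h : #(A \ B) generalizing A with
  | zero =>
    rw [card_eq_zero, sdiff_eq_empty_iff_subset] at h
    rwa [← eq_of_subset_of_card_le h hAB.ge]
  | succ m ih =>
    obtain ⟨a, ha⟩ := card_pos.1 (by rw [h]; exact m.succ_pos)
    obtain ⟨b, hb⟩ := card_pos.1 (by rw [← card_sdiff_comm hAB, h]; exact m.succ_pos)
    rw [mem_sdiff] at ha hb
    have hba : b ∉ A.erase a := fun h => hb.2 (mem_of_mem_erase h)
    refine ih (hex A hA a ha.1 b hb.2) ?_ ?_
    · rw [card_insert_of_notMem hba, card_erase_add_one ha.1, hAB]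
    · have : insert b (A.erase a) \ B = (A \ B).erase a := by
        ext x
        simp only [mem_sdiff, mem_insert, mem_erase]
        constructor
        · rintro ⟨rfl | hx, hxB⟩
          exacts [absurd hb.1 hxB, ⟨hx.1, hx.2, hxB⟩]
        · rintro ⟨hxa, hxA, hxB⟩
          exact ⟨Or.inr ⟨hxa, hxA⟩, hxB⟩
      rw [this, card_erase_of_mem (mem_sdiff.2 ha), h, Nat.add_sub_cancel]

variable {n : ℕ}

/-- The first `k` entries of the enumeration `σ 0, σ 1, …` of `Fin n`; as `k` runs from `0` to `n`
these sets form the maximal chain of `σ`. -/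
def permChain (σ : Perm (Fin n)) (k : ℕ) : Finset (Fin n) :=
  σ • ({i | (i : ℕ) < k} : Finset (Fin n))

lemma mem_permChain {σ : Perm (Fin n)} {k : ℕ} {x : Fin n} :
    x ∈ permChain σ k ↔ ((σ⁻¹ x : Fin n) : ℕ) < k := by
  rw [permChain, ← inv_smul_mem_iff]
  simp

lemma mem_permChain_apply {σ : Perm (Fin n)} {i : Fin n} {k : ℕ} :
    σ i ∈ permChain σ k ↔ (i : ℕ) < k := by
  simp [mem_permChain]

lemma permChain_mul (π σ : Perm (Fin n)) (k : ℕ) :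
    permChain (π * σ) k = π • permChain σ k :=
  mul_smul π σ _

lemma card_permChain (σ : Perm (Fin n)) {k : ℕ} (hk : k ≤ n) : #(permChain σ k) = k := by
  rw [permChain, card_smul_finset, Fin.card_filter_val_lt, min_eq_right hk]

lemma permChain_ssubset (σ : Perm (Fin n)) {k l : ℕ} (hkl : k < l) (hl : l ≤ n) :
    permChain σ k ⊂ permChain σ l := by
  refine ssubset_of_subset_of_ne (fun x hx => ?_) fun h => ?_
  · rw [mem_permChain] at hx ⊢
    omega
  · have := congrArg card h
    rw [card_permChain σ (hkl.le.trans hl), card_permChain σ hl] at this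
    omega

lemma permChain_succ (σ : Perm (Fin n)) {k : ℕ} (hk : k < n) :
    permChain σ (k + 1) = insert (σ ⟨k, hk⟩) (permChain σ k) := by
  ext x
  rw [mem_insert, mem_permChain, mem_permChain, ← Perm.inv_eq_iff_eq, Fin.ext_iff]
  dsimp only
  omega

lemma permChain_mul_swap_of_ne (σ : Perm (Fin n)) {k : ℕ} (hk : k + 1 < n) {j : ℕ}
    (hj : j ≠ k + 1) :
    permChain (σ * swap ⟨k, by omega⟩ ⟨k + 1, hk⟩) j = permChain σ j := by
  ext x
  rw [mem_permChain, mem_permChain, mul_inv_rev, swap_inv, Perm.mul_apply, swap_apply_def]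
  split_ifs <;> simp only [Fin.ext_iff] at * <;> omega

lemma exists_perm_permChain_eq_of_forall_mem_iff (w : Fin n → ℕ) :
    ∃ σ : Perm (Fin n), ∀ (t : ℕ) (S : Finset (Fin n)), (∀ x, x ∈ S ↔ w x < t) →
      permChain σ #S = S := by
  refine ⟨Tuple.sort w, fun t S hS => ?_⟩
  obtain rfl : S = ({x | w x < t} : Finset (Fin n)) := by
    ext x
    simp [hS]
  have hcard : #{x | w x < t} = #{i | w (Tuple.sort w i) < t} :=
    card_equiv (Tuple.sort w).symm (by simp)
  ext x
  rw [mem_permChain, hcard, Fin.lt_card_filter_univ_iff_apply_of_imp]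
  · simp
  · exact fun i j hji hi => (Tuple.monotone_sort w hji).trans_lt hi

lemma exists_perm_permChain_eq_of_subset {D A E : Finset (Fin n)} (hDA : D ⊆ A) (hAE : A ⊆ E) :
    ∃ σ : Perm (Fin n), permChain σ #D = D ∧ permChain σ #A = A ∧ permChain σ #E = E := by
  obtain ⟨σ, hσ⟩ := exists_perm_permChain_eq_of_forall_mem_iff
    fun x => if x ∈ D then 0 else if x ∈ A then 1 else if x ∈ E then 2 else 3
  refine ⟨σ, hσ 1 D fun x => ?_, hσ 2 A fun x => ?_, hσ 3 E fun x => ?_⟩ <;> split_ifs <;> grind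

lemma exists_perm_smul_eq {α : Type*} [DecidableEq α] {s t : Finset α} (h : #s = #t) :
    ∃ π : Perm α, π • s = t := by
  have := Set.powersetCard.isPretransitive (α := α) (n := #t)
  obtain ⟨π, hπ⟩ := MulAction.exists_smul_eq (Perm α)
    (⟨s, h⟩ : Set.powersetCard α #t) ⟨t, rfl⟩
  exact ⟨π, congrArg Subtype.val hπ⟩

lemma card_permChain_eq_eq_of_card_eq {k : ℕ} {A B : Finset (Fin n)} (hA : #A = k)
    (hB : #B = k) :
    #{σ : Perm (Fin n) | permChain σ k = A} = #{σ : Perm (Fin n) | permChain σ k = B} := by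
  obtain ⟨π, rfl⟩ := exists_perm_smul_eq (hA.trans hB.symm)
  refine card_equiv (Equiv.mulLeft π) fun σ => ?_
  simp only [mem_filter, mem_univ, true_and, coe_mulLeft, permChain_mul, smul_left_cancel_iff]

lemma card_permChain_eq_mul_choose (A : Finset (Fin n)) :
    #{σ : Perm (Fin n) | permChain σ #A = A} * n.choose #A = n ! := by
  have hA : #A ≤ n := card_finset_fin_le A
  have := card_eq_sum_card_fiberwise (f := fun σ : Perm (Fin n) => permChain σ #A) (s := univ)
    (t := powersetCard #A univ) fun σ _ => by simp [card_permChain σ hA]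
  rw [card_univ, Fintype.card_perm, Fintype.card_fin, sum_congr rfl fun B hB =>
    card_permChain_eq_eq_of_card_eq (mem_powersetCard.1 hB).2 rfl] at this
  simp [this, mul_comm]

def chainLevels (𝒜 : Finset (Finset (Fin n))) (σ : Perm (Fin n)) : Finset ℕ :=
  {k ∈ range (n + 1) | permChain σ k ∈ 𝒜}

section Family

variable {𝒜 : Finset (Finset (Fin n))}

lemma mem_chainLevels {σ : Perm (Fin n)} {k : ℕ} :
    k ∈ chainLevels 𝒜 σ ↔ k ≤ n ∧ permChain σ k ∈ 𝒜 := by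
  simp [chainLevels]

lemma sum_chainLevels_eq {M : Type*} [AddCommMonoid M] (σ : Perm (Fin n))
    (w : Finset (Fin n) → M) :
    ∑ k ∈ chainLevels 𝒜 σ, w (permChain σ k) = ∑ A ∈ 𝒜 with permChain σ #A = A, w A := by
  refine sum_nbij' (permChain σ) card (fun k hk => ?_) (fun A hA => ?_) (fun k hk => ?_)
    (fun A hA => ?_) fun _ _ => rfl
  · rw [mem_chainLevels] at hk
    simpa [card_permChain σ hk.1] using hk.2
  · rw [mem_filter] at hA
    rw [mem_chainLevels, hA.2]
    exact ⟨card_finset_fin_le A, hA.1⟩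
  · exact card_permChain σ (mem_chainLevels.1 hk).1
  · exact (mem_filter.1 hA).2

lemma sum_perm_sum_chainLevels (w : Finset (Fin n) → ℝ) :
    ∑ σ : Perm (Fin n), ∑ k ∈ chainLevels 𝒜 σ, w (permChain σ k) =
      ∑ A ∈ 𝒜, (n ! : ℝ) / n.choose #A * w A := by
  simp_rw [sum_chainLevels_eq, sum_filter]
  rw [sum_comm]
  refine sum_congr rfl fun A _ => ?_
  rw [← sum_filter, sum_const, nsmul_eq_mul]
  have hchoose : (n.choose #A : ℝ) ≠ 0 := by
    exact_mod_cast (Nat.choose_pos (card_finset_fin_le A)).ne'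
  rw [← card_permChain_eq_mul_choose A, Nat.cast_mul, mul_div_cancel_right₀ _ hchoose]

variable {c : Finset (Fin n) → ℕ}

lemma card_chainLevels_le (hc : ∀ A ∈ 𝒜, IsGreatest (chainLengths 𝒜 A) (c A))
    {σ : Perm (Fin n)} {k : ℕ} (hk : k ∈ chainLevels 𝒜 σ) :
    #(chainLevels 𝒜 σ) ≤ c (permChain σ k) :=
  (hc _ (mem_chainLevels.1 hk).2).2 <| card_mem_chainLengths
    (fun _ _ _ hj hij => permChain_ssubset σ hij (mem_chainLevels.1 hj).1)
    (fun _ hi => (mem_chainLevels.1 hi).2) hk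

end Family

section Regular

variable {𝒜 : Finset (Finset (Fin n))} {c : Finset (Fin n) → ℕ}
  (hne : ∀ σ, (chainLevels 𝒜 σ).Nonempty)
  (hreg : ∀ σ, ∀ k ∈ chainLevels 𝒜 σ, c (permChain σ k) = #(chainLevels 𝒜 σ))
include hne hreg

lemma permChain_mul_swap_mem (σ : Perm (Fin n)) {k : ℕ} (hk : k + 1 < n)
    (hmem : permChain σ (k + 1) ∈ 𝒜) :
    permChain (σ * swap ⟨k, by omega⟩ ⟨k + 1, hk⟩) (k + 1) ∈ 𝒜 := by
  set σ' := σ * swap ⟨k, by omega⟩ ⟨k + 1, hk⟩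
  by_contra hnot
  have hlevels : chainLevels 𝒜 σ' = (chainLevels 𝒜 σ).erase (k + 1) := by
    ext j
    rw [mem_erase, mem_chainLevels, mem_chainLevels]
    rcases eq_or_ne j (k + 1) with rfl | hj
    · simp [hnot]
    · rw [permChain_mul_swap_of_ne σ hk hj]
      simp [hj]
  obtain ⟨j, hj⟩ := hne σ'
  have hj' := hlevels ▸ hj
  have hc := hreg σ' j hj
  rw [permChain_mul_swap_of_ne σ hk (ne_of_mem_erase hj'), hreg σ j (mem_of_mem_erase hj'),
    hlevels, card_erase_of_mem (mem_chainLevels.2 ⟨hk.le, hmem⟩)] at hc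
  have := (hne σ).card_pos
  omega

lemma insert_erase_mem {A : Finset (Fin n)} (hA : A ∈ 𝒜) {a b : Fin n} (ha : a ∈ A)
    (hb : b ∉ A) : insert b (A.erase a) ∈ 𝒜 := by
  obtain ⟨k, hk⟩ := Nat.exists_eq_add_one_of_ne_zero (card_ne_zero_of_mem ha)
  have hkn : k + 1 < n := hk ▸ (card_lt_univ_of_notMem hb).trans_eq (Fintype.card_fin n)
  obtain ⟨σ, hD, hA', hE⟩ :=
    exists_perm_permChain_eq_of_subset (erase_subset a A) (subset_insert b A)
  rw [card_erase_of_mem ha, hk, Nat.add_sub_cancel] at hD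
  rw [card_insert_of_notMem hb, hk] at hE
  rw [hk] at hA'
  have hσb : σ ⟨k + 1, hkn⟩ = b := by
    have h := hE ▸ mem_permChain_apply (i := ⟨k + 1, hkn⟩).2 (lt_add_one (k + 1))
    rcases mem_insert.1 h with h | h
    · exact h
    · rw [← hA', mem_permChain_apply] at h
      exact absurd h (lt_irrefl _)
  have := permChain_mul_swap_mem hne hreg σ hkn (hA' ▸ hA)
  rwa [permChain_succ _ (by omega), Perm.mul_apply, swap_apply_left, hσb,
    permChain_mul_swap_of_ne σ hkn (by omega), hD] at this

end Regular

noncomputable def chainSum (𝒜 : Finset (Finset (Fin n))) (c : Finset (Fin n) → ℕ)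
    (σ : Perm (Fin n)) : ℝ :=
  ∑ k ∈ chainLevels 𝒜 σ, (c (permChain σ k) : ℝ)⁻¹

section ChainSum

variable {𝒜 : Finset (Finset (Fin n))} {c : Finset (Fin n) → ℕ}
  (hc : ∀ A ∈ 𝒜, IsGreatest (chainLengths 𝒜 A) (c A))
include hc

lemma chainSum_le_one (σ : Perm (Fin n)) : chainSum 𝒜 c σ ≤ 1 :=
  sum_inv_le_one_of_card_le fun _ hk => card_chainLevels_le hc hk

lemma sum_eq_one_iff_forall_chainSum_eq_one :
    ∑ A ∈ 𝒜, (1 : ℝ) / (n.choose #A * c A) = 1 ↔ ∀ σ, chainSum 𝒜 c σ = 1 := by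
  have hcount : ∑ σ, chainSum 𝒜 c σ = n ! * ∑ A ∈ 𝒜, (1 : ℝ) / (n.choose #A * c A) := by
    unfold chainSum
    rw [sum_perm_sum_chainLevels fun A => (c A : ℝ)⁻¹, mul_sum]
    exact sum_congr rfl fun A _ => by ring
  have hfact : (n ! : ℝ) ≠ 0 := by positivity
  calc ∑ A ∈ 𝒜, (1 : ℝ) / (n.choose #A * c A) = 1
      ↔ ∑ σ, chainSum 𝒜 c σ = ∑ _σ : Perm (Fin n), 1 := by
        rw [hcount, sum_const, card_univ, Fintype.card_perm, Fintype.card_fin, nsmul_one,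
          mul_eq_left₀ hfact]
    _ ↔ ∀ σ, chainSum 𝒜 c σ = 1 := by
        simpa using sum_eq_sum_iff_of_le (s := univ) fun σ _ => chainSum_le_one hc σ

lemma exists_levels_of_forall_chainSum_eq_one (h : ∀ σ, chainSum 𝒜 c σ = 1) :
    ∃ S : Set ℕ, ∀ A : Finset (Fin n), A ∈ 𝒜 ↔ #A ∈ S := by
  have hne σ : (chainLevels 𝒜 σ).Nonempty := nonempty_of_sum_ne_zero ((h σ).symm ▸ one_ne_zero)
  have hreg σ : ∀ k ∈ chainLevels 𝒜 σ, c (permChain σ k) = #(chainLevels 𝒜 σ) :=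
    eq_card_of_sum_inv_eq_one (fun _ hk => card_chainLevels_le hc hk) (h σ)
  refine ⟨{m | ∃ A ∈ 𝒜, #A = m}, fun B => ⟨fun hB => ⟨B, hB, rfl⟩, ?_⟩⟩
  rintro ⟨A, hA, hAB⟩
  exact mem_of_card_eq_of_insert_erase_mem
    (fun A hA a ha b hb => insert_erase_mem hne hreg hA ha hb) hA hAB

lemma chainSum_eq_one_of_levels (h𝒜 : 𝒜.Nonempty) {S : Set ℕ}
    (hS : ∀ A : Finset (Fin n), A ∈ 𝒜 ↔ #A ∈ S) (σ : Perm (Fin n)) : chainSum 𝒜 c σ = 1 := by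
  have hlevels : chainLevels 𝒜 σ = 𝒜.image card := by
    ext k
    rw [mem_chainLevels, mem_image]
    constructor
    · rintro ⟨hk, hmem⟩
      exact ⟨_, hmem, card_permChain σ hk⟩
    · rintro ⟨A, hA, rfl⟩
      have hcard := card_permChain σ (card_finset_fin_le A)
      refine ⟨card_finset_fin_le A, ?_⟩
      rw [hS, hcard, ← hS]
      exact hA
  have hcA : ∀ k ∈ chainLevels 𝒜 σ, c (permChain σ k) = #(chainLevels 𝒜 σ) := fun k hk =>
    le_antisymm (hlevels ▸ le_card_image_card_of_mem_chainLengths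
      (hc _ (mem_chainLevels.1 hk).2).1) (card_chainLevels_le hc hk)
  have hpos : (#(chainLevels 𝒜 σ) : ℝ) ≠ 0 := by
    rw [hlevels]
    exact_mod_cast (h𝒜.image card).card_pos.ne'
  rw [chainSum, sum_congr rfl fun k hk => by rw [hcA k hk], sum_const, nsmul_eq_mul,
    mul_inv_cancel₀ hpos]

end ChainSum

/-- **Equality case of the localized LYM inequality.** For a nonempty family `𝒜`, the sum equals
`1` iff `𝒜` is a union of complete levels of the Boolean lattice. -/
theorem localized_LYM_equality {n : ℕ} (𝒜 : Finset (Finset (Fin n))) (h𝒜 : 𝒜.Nonempty)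
    (c : Finset (Fin n) → ℕ)
    (hc : ∀ A ∈ 𝒜, IsGreatest {k : ℕ | ∃ f : Fin k → Finset (Fin n),
        StrictMono f ∧ (∀ i, f i ∈ 𝒜) ∧ ∃ i, f i = A} (c A)) :
    (∑ A ∈ 𝒜, (1 : ℝ) / ((n.choose A.card : ℝ) * (c A : ℝ)) = 1) ↔
      ∃ S : Set ℕ, ∀ A : Finset (Fin n), A ∈ 𝒜 ↔ A.card ∈ S := by
  rw [sum_eq_one_iff_forall_chainSum_eq_one hc]
  exact ⟨exists_levels_of_forall_chainSum_eq_one hc,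
    fun ⟨_, hS⟩ => chainSum_eq_one_of_levels hc h𝒜 hS⟩
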